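/- arXiv:math/0106165 — 2 statements merged into one kernel-verified Lean document; each statement's English description precedes it below -/
import Mathlib

section
/- Let X be a finite rack and a ∈ X. As y runs over X, a^y runs over the orbit of a under the operator group, taking each value in the orbit the same number of times, provided X has homogeneous orbits; consequently for any function g : X → G to an abelian group and any w in the free group on X acting on X, ∑_{y∈X} g(a^y) = ∑_{y∈X} g(a^{y·w}). -/
/-- A rack: a set with a binary operation `act a b = a^b` such that each
`fun a => a^b` is a bijection and the rack identity `(a^b)^c = (a^c)^(b^c)` holds. -/
structure RackStr (X : Type) where
  act : X → X → X
  bij : ∀ b, Function.Bijective fun a => act a b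
  distrib : ∀ a b c, act (act a b) c = act (act a c) (act b c)

namespace RackStr
variable {X : Type}

/-- Two elements are in the same orbit iff they are related by the equivalence
relation generated by `a ↦ a^c`. -/
def orbRel (R : RackStr X) : X → X → Prop :=
  Relation.EqvGen fun a b => ∃ c, R.act a c = b

/-- `N a b` is the number of `c` with `a^c = b`. -/
noncomputable def N (R : RackStr X) (a b : X) : ℕ :=
  Nat.card {c : X // R.act a c = b}

/-- A rack has homogeneous orbits if `N a b` depends only on the common orbit
of `a` and `b`. -/
def Homog (R : RackStr X) : Prop :=
  ∀ a b a' b', R.orbRel a b → R.orbRel b a' → R.orbRel a' b' → R.N a b = R.N a' b'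

/-- The permutation `f_b : a ↦ a^b`. -/
noncomputable def perm (R : RackStr X) (b : X) : Equiv.Perm X :=
  Equiv.ofBijective (fun a => R.act a b) (R.bij b)

/-- The action of the free group on `X` extending `b ↦ f_b`. -/
noncomputable def wact (R : RackStr X) : FreeGroup X →* Equiv.Perm X :=
  FreeGroup.lift R.perm

end RackStr

/-!
Counting `y` by the value of `a^y` gives `∑ y, g (a^y) = ∑ b, N a b • g b`. Homogeneity makes
`N a b` constant on the orbit of `a` (and it vanishes off it), so it is invariant under the
orbit-preserving permutations `b ↦ b^w`; reindexing the sum by `w` gives the identity. The constant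
value is positive because it equals `N a (a^a)`, which is why every element of the orbit is some `a^y`.
-/

namespace RackStr

variable {X : Type} (R : RackStr X)

theorem orbRel_act (a c : X) : R.orbRel a (R.act a c) :=
  .rel _ _ ⟨c, rfl⟩

theorem orbRel_wact (w : FreeGroup X) (b : X) : R.orbRel b (R.wact w b) := by
  induction w using FreeGroup.induction_on generalizing b with
  | C1 => exact .refl b
  | of x => exact R.orbRel_act b x
  | inv_of x _ =>
    have h := R.orbRel_act ((R.perm x).symm b) x
    rw [show R.act ((R.perm x).symm b) x = b from (R.perm x).apply_symm_apply b] at h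
    have hinv : R.wact (FreeGroup.of x)⁻¹ b = (R.perm x).symm b := by simp [wact]
    exact hinv ▸ .symm _ _ h
  | mul u v hu hv =>
    rw [map_mul, Equiv.Perm.mul_apply]
    exact (hv b).trans _ _ _ (hu _)

theorem N_eq_zero_of_not_orbRel {a b : X} (h : ¬ R.orbRel a b) : R.N a b = 0 :=
  have : IsEmpty {c // R.act a c = b} := ⟨fun ⟨c, hc⟩ => h (hc ▸ R.orbRel_act a c)⟩
  Nat.card_of_isEmpty

theorem N_eq_of_orbRel (hh : R.Homog) {a b c : X} (hb : R.orbRel a b) (hc : R.orbRel a c) :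
    R.N a b = R.N a c :=
  hh a b a c hb (.symm _ _ hb) hc

theorem exists_act_eq_of_orbRel [Finite X] (hh : R.Homog) {a b : X} (h : R.orbRel a b) :
    ∃ c, R.act a c = b := by
  have : Nonempty {c // R.act a c = R.act a a} := ⟨⟨a, rfl⟩⟩
  have hpos : 0 < R.N a (R.act a a) := Nat.card_pos
  rw [← R.N_eq_of_orbRel hh h (R.orbRel_act a a)] at hpos
  obtain ⟨c, hc⟩ := Nat.card_pos_iff.1 hpos |>.1
  exact ⟨c, hc⟩

theorem N_wact (hh : R.Homog) (w : FreeGroup X) (a b : X) : R.N a (R.wact w b) = R.N a b := by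
  have hw : R.orbRel a (R.wact w b) ↔ R.orbRel a b :=
    ⟨fun h => h.trans _ _ _ (.symm _ _ (R.orbRel_wact w b)),
      fun h => h.trans _ _ _ (R.orbRel_wact w b)⟩
  by_cases hb : R.orbRel a b
  · exact R.N_eq_of_orbRel hh (hw.2 hb) hb
  · rw [R.N_eq_zero_of_not_orbRel hb, R.N_eq_zero_of_not_orbRel (mt hw.1 hb)]

theorem sum_comp_act [Fintype X] {G : Type} [AddCommMonoid G] (g : X → G) (a : X) :
    ∑ y, g (R.act a y) = ∑ b, R.N a b • g b := by
  classical
  rw [← Finset.sum_fiberwise Finset.univ (R.act a)]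
  refine Finset.sum_congr rfl fun b _ => ?_
  rw [Finset.sum_congr rfl fun y hy => congrArg g (Finset.mem_filter.1 hy).2, Finset.sum_const,
    N, Nat.card_eq_fintype_card, Fintype.card_subtype]

end RackStr

theorem stmt4 {X : Type} [Fintype X] (R : RackStr X) (hh : R.Homog)
    {G : Type} [AddCommGroup G] (g : X → G) (a : X) (w : FreeGroup X) :
    (∀ b, R.orbRel a b ↔ ∃ y, R.act a y = b) ∧
    (∀ b c, R.orbRel a b → R.orbRel a c → R.N a b = R.N a c) ∧
    ∑ y : X, g (R.act a y) = ∑ y : X, g (R.wact w (R.act a y)) := by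
  refine ⟨fun b => ⟨R.exists_act_eq_of_orbRel hh, fun ⟨y, hy⟩ => hy ▸ R.orbRel_act a y⟩,
    fun b c => R.N_eq_of_orbRel hh, ?_⟩
  calc ∑ y, g (R.act a y)
      = ∑ b, R.N a b • g b := R.sum_comp_act g a
    _ = ∑ b, R.N a (R.wact w b) • g (R.wact w b) := (Equiv.sum_comp (R.wact w) _).symm
    _ = ∑ b, R.N a b • g (R.wact w b) := by simp only [R.N_wact hh]
    _ = ∑ y, g (R.wact w (R.act a y)) := (R.sum_comp_act (g ∘ R.wact w) a).symm
end

section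
/- If 4 divides n, then the dihedral rack R_{2n} (ℤ/2n with a^b = 2b − a) is isomorphic as a rack to the Alexander rack Λ_{2n}/(t − (n−1)) (ℤ/2n with a^b = (n−1)a + (2−n)b), via the map f(a) = a + ε(a) where ε(a) = 0 if a ≡ 0,1 (mod 4) and ε(a) = n if a ≡ 2,3 (mod 4). -/
/-!
Write `N` for the residue of `n` in `ℤ/2n`. Then `2N = 0`, `N² = 0` (as `n` is even) and `N·x`
depends only on the parity of `x`, while `ε(a) = N·⌊(a mod 4)/2⌋` is `N` times the second binary
digit of `a mod 4`, which is well defined because `4 ∣ 2n`. Expanding both sides, the rack identity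
reduces to `ε(2b - a) = N(a - b) + ε(a)`, i.e. to the congruence
`⌊((2b - a) mod 4)/2⌋ ≡ a - b + ⌊(a mod 4)/2⌋ (mod 2)`, checked on residues mod 4.
Since `4 ∣ N`, adding `ε(a)` does not change `a mod 4`, so `f` is an involution.
-/

/-- `ε(a) = 0` if `a ≡ 0, 1 (mod 4)` and `ε(a) = n` if `a ≡ 2, 3 (mod 4)`. -/
def eps (n : ℕ) (a : ZMod (2 * n)) : ZMod (2 * n) :=
  if a.val % 4 = 0 ∨ a.val % 4 = 1 then 0 else (n : ZMod (2 * n))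

/-- `f(a) = a + ε(a)`. -/
def fdih (n : ℕ) (a : ZMod (2 * n)) : ZMod (2 * n) := a + eps n a

lemma ZMod.intCast_val_modEq_of_dvd {m d : ℕ} [NeZero m] (hd : d ∣ m) {x : ZMod m} {z : ℤ}
    (hz : (z : ZMod m) = x) : (x.val : ℤ) ≡ z [ZMOD d] := by
  rw [← hz, ZMod.val_intCast]
  exact Int.emod_emod_of_dvd z (by exact_mod_cast hd)

section

variable {n : ℕ}

lemma natCast_add_natCast_self : (n : ZMod (2 * n)) + n = 0 := by
  rw [← Nat.cast_add, ← two_mul, ZMod.natCast_self]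

lemma natCast_mul_intCast_eq_of_modEq {a b : ℤ} (hab : a ≡ b [ZMOD 2]) :
    (n : ZMod (2 * n)) * a = n * b := by
  obtain ⟨k, hk⟩ := hab.symm.dvd
  have h2n : (2 * n : ZMod (2 * n)) = 0 := by exact_mod_cast ZMod.natCast_self (2 * n)
  rw [← sub_eq_zero, ← mul_sub, ← Int.cast_sub, hk]
  push_cast
  linear_combination (k : ZMod (2 * n)) * h2n

lemma natCast_mul_natCast_self (h : 2 ∣ n) : (n : ZMod (2 * n)) * n = 0 := by
  simpa using natCast_mul_intCast_eq_of_modEq (n := n) (a := n) (b := 0)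
    (Int.modEq_zero_iff_dvd.2 (by exact_mod_cast h))

lemma eps_eq (a : ZMod (2 * n)) : eps n a = n * (((a.val : ℤ) % 4 / 2 : ℤ) : ZMod (2 * n)) := by
  unfold eps
  split_ifs with ha
  · rw [show (a.val : ℤ) % 4 / 2 = 0 by omega]; simp
  · rw [show (a.val : ℤ) % 4 / 2 = 1 by omega]; simp

lemma eps_add_eps (a : ZMod (2 * n)) : eps n a + eps n a = 0 := by
  unfold eps
  split_ifs <;> simp [natCast_add_natCast_self]

lemma natCast_mul_eps (h : 2 ∣ n) (a : ZMod (2 * n)) : (n : ZMod (2 * n)) * eps n a = 0 := by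
  unfold eps
  split_ifs <;> simp [natCast_mul_natCast_self h]

lemma eps_add_natCast_mul (h : 4 ∣ n) (a c : ZMod (2 * n)) : eps n (a + n * c) = eps n a := by
  rcases eq_or_ne n 0 with rfl | hn
  · simp [eps]
  have : NeZero (2 * n) := ⟨by omega⟩
  obtain ⟨j, rfl⟩ := h
  have hval := ZMod.intCast_val_modEq_of_dvd (d := 4) ⟨2 * j, by ring⟩
    (x := a + ((4 * j : ℕ) : ZMod _) * c) (z := a.val + 4 * (j * c.val))
    (by push_cast; simp only [ZMod.natCast_zmod_val]; ring)
  rw [eps_eq, eps_eq]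
  congr 3
  unfold Int.ModEq at hval
  omega

lemma eps_two_mul_sub (h : 4 ∣ n) (a b : ZMod (2 * n)) :
    eps n (2 * b - a) = n * (a - b) + eps n a := by
  rcases eq_or_ne n 0 with rfl | hn
  · simp [eps]
  have : NeZero (2 * n) := ⟨by omega⟩
  have hval := ZMod.intCast_val_modEq_of_dvd (dvd_mul_of_dvd_right h 2)
    (x := 2 * b - a) (z := 2 * b.val - a.val)
    (by push_cast; simp only [ZMod.natCast_zmod_val])
  calc eps n (2 * b - a)
      = n * ((((2 * b - a).val : ℤ) % 4 / 2 : ℤ) : ZMod (2 * n)) := eps_eq _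
    _ = n * ((a.val - b.val + (a.val : ℤ) % 4 / 2 : ℤ) : ZMod (2 * n)) :=
        natCast_mul_intCast_eq_of_modEq (by unfold Int.ModEq at *; omega)
    _ = n * (a - b) + eps n a := by
        rw [eps_eq]; push_cast; simp only [ZMod.natCast_zmod_val]; ring

lemma fdih_involutive (h : 4 ∣ n) : Function.Involutive (fdih n) := by
  intro a
  have hε := eps_add_natCast_mul h a (((a.val : ℤ) % 4 / 2 : ℤ))
  rw [← eps_eq] at hε
  rw [fdih, fdih, hε, add_assoc, eps_add_eps, add_zero]

lemma fdih_two_mul_sub (h : 4 ∣ n) (a b : ZMod (2 * n)) :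
    fdih n (2 * b - a) =
      ((n : ZMod (2 * n)) - 1) * fdih n a + (2 - (n : ZMod (2 * n))) * fdih n b := by
  have h2 : 2 ∣ n := dvd_trans ⟨2, rfl⟩ h
  unfold fdih
  linear_combination eps_two_mul_sub h a b + eps_add_eps a - eps_add_eps b
    - natCast_mul_eps h2 a + natCast_mul_eps h2 b

end

/-- If `4 ∣ n`, then `f` is a rack isomorphism from the dihedral rack `R_{2n}`
(`ℤ/2n` with `a^b = 2b - a`) to the Alexander rack `Λ_{2n}/(t-(n-1))`
(`ℤ/2n` with `a^b = (n-1)a + (2-n)b`). -/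
theorem stmt19 (n : ℕ) (h : 4 ∣ n) :
    Function.Bijective (fdih n) ∧
    ∀ a b : ZMod (2 * n),
      fdih n (2 * b - a) =
        ((n : ZMod (2 * n)) - 1) * fdih n a + (2 - (n : ZMod (2 * n))) * fdih n b :=
  ⟨(fdih_involutive h).bijective, fdih_two_mul_sub h⟩
end
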